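/- Assume k and p are symmetric dispersal kernels, m, M ∈ C(Ω̄) are nonconstant, and d, D, b, c > 0 with 0 < bc ≤ 1. If (u,v) and (u*,v*) are two positive steady states of the competition system with u(x) > u*(x) and v(x) < v*(x) for all x ∈ Ω̄, then bc = 1 and u(x) + c·v(x) = u*(x) + c·v*(x) for every x ∈ Ω̄. -/

import Mathlib

/-!
Put `w = u - u*` and `z = v* - v`, both positive. The equations for the two steady states give
`d (u* K[u] - u K[u*]) = u u* (w - c z)`. Multiplying by the weight `(u - u*)² / (u u*)`, which
increases with `u / u*`, and integrating, the symmetry of `k` turns the left side into a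
nonpositive double integral, so `∫ w² (w - c z) ≤ 0`; likewise `∫ z² (z - b w) ≤ 0`. Now
`(w - c z)² (w + c z) + c² (1 - b c) w z² = w² (w - c z) + c³ z² (z - b w)`: integrating, the
two nonnegative terms on the left have nonpositive sum, which forces `b c = 1` and `w = c z`.
-/

open MeasureTheory Topology Filter

noncomputable section

abbrev Pt (n : ℕ) := EuclideanSpace ℝ (Fin n)

def IsBoundedDomain {n : ℕ} (Ω : Set (Pt n)) : Prop :=
  IsOpen Ω ∧ IsConnected Ω ∧ Bornology.IsBounded Ω

def IsDispersalKernel {n : ℕ} (k : Pt n → Pt n → ℝ) : Prop :=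
  Continuous (Function.uncurry k) ∧ (∀ x y, 0 ≤ k x y) ∧ (∀ x, 0 < k x x) ∧
  (∀ x, (∫ y, k x y) = 1) ∧ (∀ x, (∫ y, k y x) = 1)

def SymmKernel {n : ℕ} (k : Pt n → Pt n → ℝ) : Prop := ∀ x y, k x y = k y x

def nlOp {n : ℕ} (Ω : Set (Pt n)) (k : Pt n → Pt n → ℝ) (φ : Pt n → ℝ) (x : Pt n) : ℝ :=
  (∫ y in Ω, k x y * φ y) - (∫ y in Ω, k y x) * φ x

def Nonconstant {n : ℕ} (Ω : Set (Pt n)) (m : Pt n → ℝ) : Prop :=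
  ¬ ∃ a : ℝ, ∀ x ∈ closure Ω, m x = a

def SemiTrivialProfile {n : ℕ} (Ω : Set (Pt n)) (k : Pt n → Pt n → ℝ) (d : ℝ)
    (m u : Pt n → ℝ) : Prop :=
  ContinuousOn u (closure Ω) ∧ (∀ x ∈ closure Ω, 0 < u x) ∧
  ∀ x ∈ closure Ω, d * nlOp Ω k u x + u x * (m x - u x) = 0

def stabIdx {n : ℕ} (Ω : Set (Pt n)) (p : Pt n → Pt n → ℝ) (D : ℝ) (q : Pt n → ℝ) : ℝ :=
  sSup {r : ℝ | ∃ ψ : Pt n → ℝ, MemLp ψ 2 (volume.restrict Ω) ∧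
    ¬ ψ =ᵐ[volume.restrict Ω] (fun _ => (0:ℝ)) ∧
    r = (∫ x in Ω, (D * ψ x * nlOp Ω p ψ x + q x * ψ x ^ 2)) / (∫ x in Ω, ψ x ^ 2)}

def IsSteadyState {n : ℕ} (Ω : Set (Pt n)) (k p : Pt n → Pt n → ℝ)
    (d D b c : ℝ) (m M u v : Pt n → ℝ) : Prop :=
  ContinuousOn u (closure Ω) ∧ ContinuousOn v (closure Ω) ∧
  (∀ x ∈ closure Ω, d * nlOp Ω k u x + u x * (m x - u x - c * v x) = 0) ∧
  (∀ x ∈ closure Ω, D * nlOp Ω p v x + v x * (M x - b * u x - v x) = 0)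

def IsPositiveSteadyState {n : ℕ} (Ω : Set (Pt n)) (k p : Pt n → Pt n → ℝ)
    (d D b c : ℝ) (m M u v : Pt n → ℝ) : Prop :=
  IsSteadyState Ω k p d D b c m M u v ∧
  (∀ x ∈ closure Ω, 0 < u x) ∧ (∀ x ∈ closure Ω, 0 < v x)

def IsBoundedClassicalSolution {n : ℕ} (Ω : Set (Pt n)) (k p : Pt n → Pt n → ℝ)
    (d D b c : ℝ) (m M : Pt n → ℝ) (u v : Pt n → ℝ → ℝ) : Prop :=
  ContinuousOn (fun q : Pt n × ℝ => u q.1 q.2) (closure Ω ×ˢ Set.Ici 0) ∧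
  ContinuousOn (fun q : Pt n × ℝ => v q.1 q.2) (closure Ω ×ˢ Set.Ici 0) ∧
  (∃ C : ℝ, ∀ x ∈ closure Ω, ∀ t ≥ (0:ℝ), |u x t| ≤ C ∧ |v x t| ≤ C) ∧
  (∀ x ∈ closure Ω, ∀ t ≥ (0:ℝ), DifferentiableWithinAt ℝ (u x) (Set.Ici 0) t ∧
      DifferentiableWithinAt ℝ (v x) (Set.Ici 0) t) ∧
  (∀ x ∈ closure Ω, ∀ t > (0:ℝ),
      HasDerivAt (u x)
        (d * nlOp Ω k (fun y => u y t) x + u x t * (m x - u x t - c * v x t)) t ∧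
      HasDerivAt (v x)
        (D * nlOp Ω p (fun y => v y t) x + v x t * (M x - b * u x t - v x t)) t)

section Integration

variable {X : Type*} [TopologicalSpace X] [MeasurableSpace X] [OpensMeasurableSpace X]
  {μ : Measure X} [μ.IsOpenPosMeasure] {s : Set X} {f : X → ℝ}

theorem eqOn_zero_of_setIntegral_nonpos (hs : IsOpen s) (hf : ContinuousOn f s)
    (hfi : IntegrableOn f s μ) (hf0 : ∀ x ∈ s, 0 ≤ f x) (hle : ∫ x in s, f x ∂μ ≤ 0) :
    Set.EqOn f 0 s := by
  have hnonneg : 0 ≤ᵐ[μ.restrict s] f := ae_restrict_of_forall_mem hs.measurableSet hf0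
  have hzero : ∫ x in s, f x ∂μ = 0 :=
    le_antisymm hle (setIntegral_nonneg hs.measurableSet hf0)
  exact Measure.eqOn_open_of_ae_eq ((setIntegral_eq_zero_iff_of_nonneg_ae hnonneg hfi).1 hzero)
    hs hf continuousOn_const

theorem setIntegral_pos_of_continuousOn_nonneg (hs : IsOpen s) (hf : ContinuousOn f s)
    (hfi : IntegrableOn f s μ) (hf0 : ∀ x ∈ s, 0 ≤ f x) {x₀ : X} (hx₀ : x₀ ∈ s)
    (hpos : 0 < f x₀) : 0 < ∫ x in s, f x ∂μ := by
  by_contra! hle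
  exact hpos.ne' (eqOn_zero_of_setIntegral_nonpos hs hf hfi hf0 hle hx₀)

end Integration

theorem ContinuousOn.integrableOn_of_isBounded {X : Type*} [MetricSpace X] [ProperSpace X]
    [MeasurableSpace X] [OpensMeasurableSpace X] {μ : Measure X} [IsFiniteMeasureOnCompacts μ]
    {s : Set X} (hs : Bornology.IsBounded s) {f : X → ℝ} (hf : ContinuousOn f (closure s)) :
    IntegrableOn f s μ :=
  (hf.integrableOn_compact hs.isCompact_closure).mono_set subset_closure

theorem integral_integral_nonpos_of_add_swap_nonpos {α : Type*} [MeasurableSpace α]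
    {μ : Measure α} [SFinite μ] {F : α → α → ℝ}
    (hF : Integrable (Function.uncurry F) (μ.prod μ))
    (hswap : ∀ᵐ q ∂μ.prod μ, F q.1 q.2 + F q.2 q.1 ≤ 0) :
    ∫ x, ∫ y, F x y ∂μ ∂μ ≤ 0 := by
  have hF₁ : Integrable (fun q : α × α => F q.1 q.2) (μ.prod μ) := hF
  have hF₂ : Integrable (fun q : α × α => F q.2 q.1) (μ.prod μ) := hF.swap
  have hsymm : ∫ q, F q.2 q.1 ∂μ.prod μ = ∫ q, F q.1 q.2 ∂μ.prod μ :=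
    integral_prod_swap (Function.uncurry F)
  have hsum : ∫ q, (F q.1 q.2 + F q.2 q.1) ∂μ.prod μ ≤ 0 := integral_nonpos_of_ae hswap
  rw [integral_add hF₁ hF₂, hsymm] at hsum
  rw [integral_integral hF]
  linarith

-- For `r := A / P > 1` the weight `(A - P)² / (A P) = r + 1/r - 2` increases with `r`,
-- while `P B - A Q` has the sign of `B / Q - A / P`.
theorem sub_sq_div_mul_sub_nonpos {A P B Q : ℝ} (hP : 0 < P) (hPA : P < A) (hQ : 0 < Q)
    (hQB : Q < B) : ((A - P) ^ 2 / (A * P) - (B - Q) ^ 2 / (B * Q)) * (P * B - A * Q) ≤ 0 := by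
  have hA : 0 < A := hP.trans hPA
  have hB : 0 < B := hQ.trans hQB
  have key : ((A - P) ^ 2 / (A * P) - (B - Q) ^ 2 / (B * Q)) * (P * B - A * Q)
      = -((A * Q - B * P) ^ 2 * (A * B - P * Q)) / (A * P * (B * Q)) := by
    field_simp
    ring
  rw [key]
  have hAB : 0 ≤ A * B - P * Q := by nlinarith
  exact div_nonpos_of_nonpos_of_nonneg (neg_nonpos.2 (mul_nonneg (sq_nonneg _) hAB)) (by positivity)

section NonlocalOperator

variable {n : ℕ} {Ω : Set (Pt n)} {k : Pt n → Pt n → ℝ}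

theorem mul_nlOp_sub_mul_nlOp (hΩ : Bornology.IsBounded Ω) (hk : Continuous (Function.uncurry k))
    {f g : Pt n → ℝ} (hf : ContinuousOn f (closure Ω)) (hg : ContinuousOn g (closure Ω))
    (x : Pt n) :
    f x * nlOp Ω k g x - g x * nlOp Ω k f x = ∫ y in Ω, k x y * (f x * g y - g x * f y) := by
  have hkx : ContinuousOn (k x) (closure Ω) := (hk.comp (Continuous.prodMk_right x)).continuousOn
  have hkf : IntegrableOn (fun y => k x y * f y) Ω := (hkx.mul hf).integrableOn_of_isBounded hΩ
  have hkg : IntegrableOn (fun y => k x y * g y) Ω := (hkx.mul hg).integrableOn_of_isBounded hΩ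
  rw [show f x * nlOp Ω k g x - g x * nlOp Ω k f x
      = f x * (∫ y in Ω, k x y * g y) - g x * (∫ y in Ω, k x y * f y) by unfold nlOp; ring,
    ← integral_const_mul, ← integral_const_mul,
    ← integral_sub (hkg.const_mul _) (hkf.const_mul _)]
  exact integral_congr_ae (ae_of_all _ fun y => by ring)

-- Symmetrizing in `(x, y)` turns the double integral into half of
-- `∫∫ k x y (h x - h y) (f x g y - g x f y)`.
theorem setIntegral_mul_cross_nonpos (hΩm : MeasurableSet Ω) (hΩ : Bornology.IsBounded Ω)
    (hk : IsDispersalKernel k) (hks : SymmKernel k) {f g h : Pt n → ℝ}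
    (hf : ContinuousOn f (closure Ω)) (hg : ContinuousOn g (closure Ω))
    (hh : ContinuousOn h (closure Ω))
    (hmono : ∀ x ∈ Ω, ∀ y ∈ Ω, (h x - h y) * (f x * g y - g x * f y) ≤ 0) :
    ∫ x in Ω, h x * (f x * nlOp Ω k g x - g x * nlOp Ω k f x) ≤ 0 := by
  set F : Pt n → Pt n → ℝ := fun x y => h x * (k x y * (f x * g y - g x * f y))
  have hF : ContinuousOn (Function.uncurry F) (closure (Ω ×ˢ Ω)) := by
    rw [closure_prod_eq]
    have h₁ : Set.MapsTo Prod.fst (closure Ω ×ˢ closure Ω) (closure Ω) := fun q hq => hq.1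
    have h₂ : Set.MapsTo Prod.snd (closure Ω ×ˢ closure Ω) (closure Ω) := fun q hq => hq.2
    exact (hh.comp continuousOn_fst h₁).mul (hk.1.continuousOn.mul
      (((hf.comp continuousOn_fst h₁).mul (hg.comp continuousOn_snd h₂)).sub
        ((hg.comp continuousOn_fst h₁).mul (hf.comp continuousOn_snd h₂))))
  have hFi : Integrable (Function.uncurry F) ((volume.restrict Ω).prod (volume.restrict Ω)) := by
    rw [Measure.prod_restrict]
    exact hF.integrableOn_of_isBounded (hΩ.prod hΩ)
  have hswap :
      ∀ᵐ q ∂(volume.restrict Ω).prod (volume.restrict Ω), F q.1 q.2 + F q.2 q.1 ≤ 0 := by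
    rw [Measure.prod_restrict]
    refine (ae_restrict_iff' (hΩm.prod hΩm)).2 (ae_of_all _ ?_)
    rintro ⟨x, y⟩ ⟨hx, hy⟩
    calc F x y + F y x = k x y * ((h x - h y) * (f x * g y - g x * f y)) := by
          simp only [F, hks y x]; ring
      _ ≤ 0 := mul_nonpos_of_nonneg_of_nonpos (hk.2.1 x y) (hmono x hx y hy)
  calc ∫ x in Ω, h x * (f x * nlOp Ω k g x - g x * nlOp Ω k f x)
      = ∫ x in Ω, ∫ y in Ω, F x y := by
        refine integral_congr_ae (ae_of_all _ fun x => ?_)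
        dsimp only
        rw [mul_nlOp_sub_mul_nlOp hΩ hk.1 hf hg, ← integral_const_mul]
    _ ≤ 0 := integral_integral_nonpos_of_add_swap_nonpos hFi hswap

theorem setIntegral_sq_sub_mul_nonpos (hΩm : MeasurableSet Ω) (hΩ : Bornology.IsBounded Ω)
    (hk : IsDispersalKernel k) (hks : SymmKernel k) {d : ℝ} (hd : 0 ≤ d) {f g e : Pt n → ℝ}
    (hf : ContinuousOn f (closure Ω)) (hg : ContinuousOn g (closure Ω))
    (hf0 : ∀ x ∈ closure Ω, 0 < f x) (hfg : ∀ x ∈ closure Ω, f x < g x)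
    (heq : ∀ x ∈ closure Ω,
      d * (f x * nlOp Ω k g x - g x * nlOp Ω k f x) = f x * g x * e x) :
    ∫ x in Ω, (g x - f x) ^ 2 * e x ≤ 0 := by
  have hgf0 : ∀ x ∈ closure Ω, g x * f x ≠ 0 :=
    fun x hx => (mul_pos ((hf0 x hx).trans (hfg x hx)) (hf0 x hx)).ne'
  have hh : ContinuousOn (fun x => (g x - f x) ^ 2 / (g x * f x)) (closure Ω) :=
    ((hg.sub hf).pow 2).div (hg.mul hf) hgf0
  have hmono : ∀ x ∈ Ω, ∀ y ∈ Ω,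
      ((g x - f x) ^ 2 / (g x * f x) - (g y - f y) ^ 2 / (g y * f y))
        * (f x * g y - g x * f y) ≤ 0 := fun x hx y hy =>
    sub_sq_div_mul_sub_nonpos (hf0 x (subset_closure hx)) (hfg x (subset_closure hx))
      (hf0 y (subset_closure hy)) (hfg y (subset_closure hy))
  calc ∫ x in Ω, (g x - f x) ^ 2 * e x
      = d * ∫ x in Ω, (g x - f x) ^ 2 / (g x * f x)
          * (f x * nlOp Ω k g x - g x * nlOp Ω k f x) := by
        rw [← integral_const_mul]
        refine setIntegral_congr_fun hΩm fun x hx => ?_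
        have hx' := subset_closure hx
        rw [mul_left_comm, heq x hx', div_mul_eq_mul_div, eq_div_iff (hgf0 x hx')]
        ring
    _ ≤ 0 := mul_nonpos_of_nonneg_of_nonpos hd
        (setIntegral_mul_cross_nonpos hΩm hΩ hk hks hf hg hh hmono)

end NonlocalOperator

theorem mul_eq_one_and_eqOn_of_setIntegral_nonpos {X : Type*} [MetricSpace X] [ProperSpace X]
    [MeasurableSpace X] [OpensMeasurableSpace X] {μ : Measure X} [IsFiniteMeasureOnCompacts μ]
    [μ.IsOpenPosMeasure] {Ω : Set X} (hΩo : IsOpen Ω) (hΩb : Bornology.IsBounded Ω)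
    (hΩne : Ω.Nonempty) {w z : X → ℝ} (hw : ContinuousOn w (closure Ω))
    (hz : ContinuousOn z (closure Ω)) (hw0 : ∀ x ∈ Ω, 0 < w x) (hz0 : ∀ x ∈ Ω, 0 < z x)
    {b c : ℝ} (hc : 0 < c) (hbc : b * c ≤ 1)
    (hwz : ∫ x in Ω, w x ^ 2 * (w x - c * z x) ∂μ ≤ 0)
    (hzw : ∫ x in Ω, z x ^ 2 * (z x - b * w x) ∂μ ≤ 0) :
    b * c = 1 ∧ ∀ x ∈ Ω, w x = c * z x := by
  have hint : ∀ {φ : X → ℝ}, ContinuousOn φ (closure Ω) → IntegrableOn φ Ω μ :=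
    fun hφ => hφ.integrableOn_of_isBounded hΩb
  set N : X → ℝ := fun x => (w x - c * z x) ^ 2 * (w x + c * z x)
  set W : X → ℝ := fun x => w x * z x ^ 2
  have hN : ContinuousOn N (closure Ω) := by fun_prop
  have hW : ContinuousOn W (closure Ω) := by fun_prop
  have hN0 : ∀ x ∈ Ω, 0 ≤ N x := fun x hx =>
    mul_nonneg (sq_nonneg _) (by nlinarith [hw0 x hx, hz0 x hx])
  have hsplit : (∫ x in Ω, N x ∂μ) + c ^ 2 * (1 - b * c) * ∫ x in Ω, W x ∂μ
      = (∫ x in Ω, w x ^ 2 * (w x - c * z x) ∂μ)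
        + c ^ 3 * ∫ x in Ω, z x ^ 2 * (z x - b * w x) ∂μ := by
    rw [← integral_const_mul, ← integral_const_mul,
      ← integral_add (hint hN) ((hint hW).const_mul _),
      ← integral_add (hint (by fun_prop)) ((hint (by fun_prop)).const_mul _)]
    exact setIntegral_congr_fun hΩo.measurableSet fun x _ => by ring
  have hrest : (∫ x in Ω, N x ∂μ) + c ^ 2 * (1 - b * c) * ∫ x in Ω, W x ∂μ ≤ 0 := by
    rw [hsplit]
    linarith [mul_nonpos_of_nonneg_of_nonpos (pow_pos hc 3).le hzw]
  have hNint : 0 ≤ ∫ x in Ω, N x ∂μ := setIntegral_nonneg hΩo.measurableSet hN0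
  obtain ⟨x₀, hx₀⟩ := hΩne
  have hWint : 0 < ∫ x in Ω, W x ∂μ :=
    setIntegral_pos_of_continuousOn_nonneg hΩo (hW.mono subset_closure) (hint hW)
      (fun x hx => (mul_pos (hw0 x hx) (pow_pos (hz0 x hx) 2)).le) hx₀
      (mul_pos (hw0 x₀ hx₀) (pow_pos (hz0 x₀ hx₀) 2))
  have hbc1 : b * c = 1 := by
    refine le_antisymm hbc (sub_nonpos.1
      (le_of_mul_le_mul_right (a := c ^ 2 * ∫ x in Ω, W x ∂μ) ?_ (by positivity)))
    linarith
  refine ⟨hbc1, fun x hx => ?_⟩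
  have hNzero : Set.EqOn N 0 Ω := by
    refine eqOn_zero_of_setIntegral_nonpos hΩo (hN.mono subset_closure) (hint hN) hN0 ?_
    rw [hbc1] at hrest
    linarith
  have hsq : (w x - c * z x) ^ 2 = 0 :=
    (mul_eq_zero.1 (hNzero hx)).resolve_right (by nlinarith [hw0 x hx, hz0 x hx])
  linear_combination pow_eq_zero_iff two_ne_zero |>.1 hsq

theorem stmt_6_general {n : ℕ} (Ω : Set (Pt n)) (hΩ : IsBoundedDomain Ω)
    (k p : Pt n → Pt n → ℝ)
    (hk : IsDispersalKernel k) (hp : IsDispersalKernel p)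
    (hks : SymmKernel k) (hps : SymmKernel p)
    (m M : Pt n → ℝ)
    (d D b c : ℝ) (hd : 0 < d) (hD : 0 < D) (hc : 0 < c)
    (hbc : b * c ≤ 1)
    (u v us vs : Pt n → ℝ)
    (huv : IsPositiveSteadyState Ω k p d D b c m M u v)
    (husvs : IsPositiveSteadyState Ω k p d D b c m M us vs)
    (hord1 : ∀ x ∈ closure Ω, us x < u x) (hord2 : ∀ x ∈ closure Ω, v x < vs x) :
    b * c = 1 ∧ ∀ x ∈ closure Ω, u x + c * v x = us x + c * vs x := by
  obtain ⟨hΩo, hΩc, hΩb⟩ := hΩ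
  obtain ⟨⟨hu, hv, hue, hve⟩, -, hv0⟩ := huv
  obtain ⟨⟨hus, hvs, huse, hvse⟩, hus0, -⟩ := husvs
  have hu_int : ∫ x in Ω, (u x - us x) ^ 2 * (u x - us x - c * (vs x - v x)) ≤ 0 :=
    setIntegral_sq_sub_mul_nonpos hΩo.measurableSet hΩb hk hks hd.le hus hu hus0 hord1
      fun x hx => by linear_combination us x * hue x hx - u x * huse x hx
  have hv_int : ∫ x in Ω, (vs x - v x) ^ 2 * (vs x - v x - b * (u x - us x)) ≤ 0 :=
    setIntegral_sq_sub_mul_nonpos hΩo.measurableSet hΩb hp hps hD.le hv hvs hv0 hord2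
      fun x hx => by linear_combination v x * hvse x hx - vs x * hve x hx
  obtain ⟨hbc1, hlin⟩ := mul_eq_one_and_eqOn_of_setIntegral_nonpos hΩo hΩb hΩc.nonempty
    (hu.sub hus) (hvs.sub hv) (fun x hx => sub_pos.2 (hord1 x (subset_closure hx)))
    (fun x hx => sub_pos.2 (hord2 x (subset_closure hx))) hc hbc hu_int hv_int
  refine ⟨hbc1, Set.EqOn.of_subset_closure (fun x hx => ?_) (by fun_prop) (by fun_prop)
    subset_closure subset_rfl⟩
  have hx' : u x - us x = c * (vs x - v x) := hlin x hx
  linear_combination hx'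

theorem stmt_6 {n : ℕ} (Ω : Set (Pt n)) (hΩ : IsBoundedDomain Ω)
    (k p : Pt n → Pt n → ℝ)
    (hk : IsDispersalKernel k) (hp : IsDispersalKernel p)
    (hks : SymmKernel k) (hps : SymmKernel p)
    (m M : Pt n → ℝ)
    (hm : ContinuousOn m (closure Ω)) (hM : ContinuousOn M (closure Ω))
    (hmnc : Nonconstant Ω m) (hMnc : Nonconstant Ω M)
    (d D b c : ℝ) (hd : 0 < d) (hD : 0 < D) (hb : 0 < b) (hc : 0 < c)
    (hbc : b * c ≤ 1)
    (u v us vs : Pt n → ℝ)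
    (huv : IsPositiveSteadyState Ω k p d D b c m M u v)
    (husvs : IsPositiveSteadyState Ω k p d D b c m M us vs)
    (hord1 : ∀ x ∈ closure Ω, us x < u x) (hord2 : ∀ x ∈ closure Ω, v x < vs x) :
    b * c = 1 ∧ ∀ x ∈ closure Ω, u x + c * v x = us x + c * vs x :=
  stmt_6_general Ω hΩ k p hk hp hks hps m M d D b c hd hD hc hbc u v us vs huv husvs hord1 hord2
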